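/- arXiv:1304.6532 — 4 statements merged into one kernel-verified Lean document; each statement's English description precedes it below -/
import Mathlib

section
/- Let m > n ≥ 1 be positive integers such that the ratio m/n is not a (positive or negative) power of a single prime, i.e. there is no prime p and integer k with m = n·p^k or n = m·p^k. Then the cyclotomic polynomials Φ_m and Φ_n generate the unit ideal in ℤ[X]: there exist polynomials u, v ∈ ℤ[X] with u·Φ_m + v·Φ_n = 1. -/
open Polynomial

/-- If `m > n ≥ 1` and `m/n` is not a (positive or negative) power of a single prime,
then the cyclotomic polynomials `Φ_m` and `Φ_n` generate the unit ideal of `ℤ[X]`. -/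
theorem cyclotomic_comaximal_of_ratio_not_primePow (m n : ℕ) (hn : 1 ≤ n) (hmn : n < m)
    (h : ¬ ∃ (p k : ℕ), p.Prime ∧ 1 ≤ k ∧ (m = n * p ^ k ∨ n = m * p ^ k)) :
    ∃ u v : Polynomial ℤ,
      u * Polynomial.cyclotomic m ℤ + v * Polynomial.cyclotomic n ℤ = 1 := by
  by_contra hcon
  have hm0 : 0 < m := lt_trans (by omega) hmn
  have hn0 : 0 < n := hn
  -- the ideal generated by the two cyclotomics is proper
  have hne : Ideal.span {cyclotomic m ℤ, cyclotomic n ℤ} ≠ ⊤ := by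
    intro htop
    have h1 : (1 : ℤ[X]) ∈ Ideal.span {cyclotomic m ℤ, cyclotomic n ℤ} := htop ▸ trivial
    rw [Ideal.mem_span_pair] at h1
    obtain ⟨u, v, huv⟩ := h1
    exact hcon ⟨u, v, huv⟩
  obtain ⟨M, hMmax, hM⟩ := Ideal.exists_le_maximal _ hne
  haveI : M.IsMaximal := hMmax
  -- the residue field and the image of X
  let K := ℤ[X] ⧸ M
  letI : Field K := Ideal.Quotient.field M
  let φ : ℤ[X] →+* K := Ideal.Quotient.mk M
  let μ : K := φ X
  -- both cyclotomics vanish at μ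
  have key : ∀ l : ℕ, cyclotomic l ℤ ∈ M → (cyclotomic l K).IsRoot μ := by
    intro l hl
    have hφ : φ (cyclotomic l ℤ) = 0 := (Ideal.Quotient.eq_zero_iff_mem).mpr hl
    have : (cyclotomic l K) = (cyclotomic l ℤ).map (Int.castRingHom K) :=
      (map_cyclotomic_int l K).symm
    rw [IsRoot.def, this, eval_map]
    have hcomp : (Int.castRingHom K) = φ.comp (C : ℤ →+* ℤ[X]) :=
      Subsingleton.elim _ _
    calc eval₂ (Int.castRingHom K) μ (cyclotomic l ℤ)
        = eval₂ (φ.comp (C : ℤ →+* ℤ[X])) (φ X) (cyclotomic l ℤ) := by rw [hcomp]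
      _ = φ (eval₂ C X (cyclotomic l ℤ)) := (hom_eval₂ _ _ _ _).symm
      _ = φ (cyclotomic l ℤ) := by rw [eval₂_C_X]
      _ = 0 := hφ
  have hrm : (cyclotomic m K).IsRoot μ :=
    key m (hM (Ideal.subset_span (by simp)))
  have hrn : (cyclotomic n K).IsRoot μ :=
    key n (hM (Ideal.subset_span (by simp)))
  -- split on the characteristic of K
  obtain ⟨p, hp⟩ := CharP.exists K
  haveI := hp
  rcases CharP.char_is_prime_or_zero K p with hpp | rfl
  · -- positive characteristic p
    haveI : Fact p.Prime := ⟨hpp⟩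
    set a := m.factorization p with ha
    set b := n.factorization p with hb
    set m' := m / p ^ a with hm'
    set n' := n / p ^ b with hn'
    have hmfac : p ^ a * m' = m := Nat.ordProj_mul_ordCompl_eq_self m p
    have hnfac : p ^ b * n' = n := Nat.ordProj_mul_ordCompl_eq_self n p
    have hpm' : ¬ p ∣ m' := Nat.not_dvd_ordCompl hpp hm0.ne'
    have hpn' : ¬ p ∣ n' := Nat.not_dvd_ordCompl hpp hn0.ne'
    haveI : NeZero (m' : K) := ⟨fun h0 => hpm' ((CharP.cast_eq_zero_iff K p m').mp h0)⟩
    haveI : NeZero (n' : K) := ⟨fun h0 => hpn' ((CharP.cast_eq_zero_iff K p n').mp h0)⟩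
    have h1 : IsPrimitiveRoot μ m' := by
      rw [← isRoot_cyclotomic_prime_pow_mul_iff_of_charP (k := a) (p := p)]
      rwa [hmfac]
    have h2 : IsPrimitiveRoot μ n' := by
      rw [← isRoot_cyclotomic_prime_pow_mul_iff_of_charP (k := b) (p := p)]
      rwa [hnfac]
    have hmn' : m' = n' := h1.unique h2
    -- compare exponents
    have hm'pos : 0 < m' := Nat.ordCompl_pos p hm0.ne'
    have hab : b < a := by
      by_contra hba
      push_neg at hba
      have : m ≤ n := by
        rw [← hmfac, ← hnfac, hmn']
        exact Nat.mul_le_mul_right _ (Nat.pow_le_pow_right hpp.pos hba)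
      omega
    refine h ⟨p, a - b, hpp, by omega, Or.inl ?_⟩
    rw [← hmfac, ← hnfac, hmn']
    rw [mul_comm (p ^ b) n', mul_assoc, ← pow_add, mul_comm n']
    congr 1
    congr 1
    omega
  · -- characteristic zero
    haveI : CharZero K := CharP.charP_to_charZero K
    haveI : NeZero (m : K) := ⟨Nat.cast_ne_zero.mpr hm0.ne'⟩
    haveI : NeZero (n : K) := ⟨Nat.cast_ne_zero.mpr hn0.ne'⟩
    have h1 : IsPrimitiveRoot μ m := (isRoot_cyclotomic_iff).mp hrm
    have h2 : IsPrimitiveRoot μ n := (isRoot_cyclotomic_iff).mp hrn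
    exact absurd (h1.unique h2) (by omega)
end

section
/- Let α and β be roots of unity in ℂ with α ≠ β, and suppose the order of αβ^{-1} is a prime power p^k with k ≥ 1. Then α − β is not a unit in the ring of algebraic integers of ℚ(α, β); indeed p divides the norm of α − β. -/
/-!
Write `α - β = -β (1 - ζ)` with `ζ = α β⁻¹` a primitive `p^k`-th root of unity; `β` is an
algebraic integer, so it suffices that `1 - ζ` is not a unit. Evaluating the cyclotomic polynomial
at `1` gives `∏ (1 - μ) = p` over the primitive `p^k`-th roots `μ`. Each `μ` has a power
equal to `ζ`, so `1 - μ ∣ 1 - ζ`; if `1 - ζ` were a unit, so would be `p`, which is impossible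
in an integral extension of `ℤ`.
-/

open Polynomial

namespace IsPrimitiveRoot

variable {R : Type*} [CommRing R] [IsDomain R] {ζ : R} {p k : ℕ}

theorem prod_one_sub_primitiveRoots_prime_pow (hp : p.Prime)
    (hζ : IsPrimitiveRoot ζ (p ^ (k + 1))) :
    ∏ μ ∈ primitiveRoots (p ^ (k + 1)) R, (1 - μ) = p := by
  have : Fact p.Prime := ⟨hp⟩
  simpa [cyclotomic_eq_prod_X_sub_primitiveRoots hζ, eval_prod] using
    eval_one_cyclotomic_prime_pow (R := R) (p := p) k

theorem isUnit_natCast_of_isUnit_one_sub (hp : p.Prime) (hζ : IsPrimitiveRoot ζ (p ^ (k + 1)))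
    (h : IsUnit (1 - ζ)) : IsUnit (p : R) := by
  rw [← hζ.prod_one_sub_primitiveRoots_prime_pow hp, IsUnit.prod_iff]
  intro μ hμ
  have : NeZero (p ^ (k + 1)) := ⟨pow_ne_zero _ hp.ne_zero⟩
  obtain ⟨m, -, hμm⟩ :=
    ((mem_primitiveRoots (NeZero.pos _)).mp hμ).eq_pow_of_pow_eq_one hζ.pow_eq_one
  exact isUnit_of_dvd_unit (hμm ▸ one_sub_dvd_one_sub_pow μ m) h

theorem not_isUnit_one_sub [Algebra.IsIntegral ℤ R] [CharZero R] (hp : p.Prime)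
    (hζ : IsPrimitiveRoot ζ (p ^ (k + 1))) : ¬ IsUnit (1 - ζ) := fun h => by
  have hpR : IsUnit (algebraMap ℤ R p) := by simpa using hζ.isUnit_natCast_of_isUnit_one_sub hp h
  have := Int.isUnit_iff_natAbs_eq.mp (isUnit_of_map_unit _ _ hpR)
  exact hp.ne_one (by simpa using this)

end IsPrimitiveRoot

theorem sub_not_unit_of_adjacent_roots_of_unity_general (α β : ℂ)
    (hβ : ∃ l : ℕ, 0 < l ∧ β ^ l = 1)
    (p k : ℕ) (hp : p.Prime) (hk : 1 ≤ k)
    (hord : orderOf (α * β⁻¹) = p ^ k) :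
    ∀ x : integralClosure ℤ ℂ, (x : ℂ) = α - β → ¬ IsUnit x := by
  intro x hx hux
  obtain ⟨l, hl, hβl⟩ := hβ
  obtain ⟨k, rfl⟩ : ∃ k', k = k' + 1 := ⟨k - 1, by omega⟩
  have hζ : IsPrimitiveRoot (α * β⁻¹) (p ^ (k + 1)) := hord ▸ IsPrimitiveRoot.orderOf _
  let ζ : integralClosure ℤ ℂ := ⟨α * β⁻¹, hζ.isIntegral (pow_pos hp.pos _)⟩
  let b : integralClosure ℤ ℂ := ⟨β, .of_pow hl (hβl ▸ isIntegral_one)⟩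
  have hβ0 : β ≠ 0 := by rintro rfl; simp [zero_pow hl.ne'] at hβl
  have hx_eq : (1 - ζ) * -b = x := Subtype.ext <| by
    simp only [ζ, b, hx]
    push_cast
    field_simp
    ring
  have hζO : IsPrimitiveRoot ζ (p ^ (k + 1)) :=
    hζ.of_map_of_injective (f := (integralClosure ℤ ℂ).val) Subtype.val_injective
  exact hζO.not_isUnit_one_sub hp (isUnit_of_mul_isUnit_left (hx_eq ▸ hux))

/-- If `α ≠ β` are roots of unity in `ℂ` whose quotient has order a prime power `p^k`
(`k ≥ 1`), then `α - β` is not a unit in the ring of algebraic integers. -/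
theorem sub_not_unit_of_adjacent_roots_of_unity (α β : ℂ)
    (hα : ∃ l : ℕ, 0 < l ∧ α ^ l = 1) (hβ : ∃ l : ℕ, 0 < l ∧ β ^ l = 1)
    (hne : α ≠ β) (p k : ℕ) (hp : p.Prime) (hk : 1 ≤ k)
    (hord : orderOf (α * β⁻¹) = p ^ k) :
    ∀ x : integralClosure ℤ ℂ, (x : ℂ) = α - β → ¬ IsUnit x :=
  sub_not_unit_of_adjacent_roots_of_unity_general α β hβ p k hp hk hord
end

section
/- Define two positive integers m, n to be adjacent (written m ~ n) if m/n or n/m equals a positive power p^a of a single prime p. For a prime p define U_p = { n ∈ ℕ_{>0} : p ∣ n → p² ∣ n }. Then for every n ∈ U_p, the set of m adjacent to n with m ∉ U_p contains at most one element (namely p·n if p ∤ n, and p·n' if n = p^k·n' with p ∤ n' and k ≥ 2). In particular U_p is open in the Habiro topology on ℕ_{>0}, even though its complement is infinite. -/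
/-- For a prime `p` and `n` in `U_p = {n : p ∣ n → p² ∣ n}`, the set of `m` adjacent to `n`
(the ratio of `m` and `n` is a positive prime power) with `m ∉ U_p` has at most one
element; in particular `U_p` is Habiro-open, although its complement is infinite. -/
theorem habiro_open_Up (p : ℕ) (hp : p.Prime) :
    (∀ n : ℕ, 0 < n → (p ∣ n → p ^ 2 ∣ n) →
      {m : ℕ | 0 < m ∧ (∃ q a : ℕ, q.Prime ∧ 1 ≤ a ∧ (m = n * q ^ a ∨ n = m * q ^ a)) ∧
        ¬ (p ∣ m → p ^ 2 ∣ m)}.Subsingleton) ∧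
    (∀ n : ℕ, 0 < n → (p ∣ n → p ^ 2 ∣ n) →
      {m : ℕ | 0 < m ∧ (∃ q a : ℕ, q.Prime ∧ 1 ≤ a ∧ (m = n * q ^ a ∨ n = m * q ^ a)) ∧
        ¬ (p ∣ m → p ^ 2 ∣ m)}.Finite) ∧
    {n : ℕ | 0 < n ∧ ¬ (p ∣ n → p ^ 2 ∣ n)}.Infinite := by
  have key : ∀ n : ℕ, 0 < n → (p ∣ n → p ^ 2 ∣ n) →
      ∀ m ∈ {m : ℕ | 0 < m ∧ (∃ q a : ℕ, q.Prime ∧ 1 ≤ a ∧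
        (m = n * q ^ a ∨ n = m * q ^ a)) ∧ ¬ (p ∣ m → p ^ 2 ∣ m)},
      m * p ^ (n.factorization p) = n * p := by
    intro n hn hU m hmem
    obtain ⟨hm, ⟨q, a, hq, ha, hrel⟩, hnot⟩ := hmem
    push_neg at hnot
    obtain ⟨h1, h2⟩ := hnot
    rcases hrel with h | h
    · -- m = n * q ^ a
      have hqp : q = p := by
        by_contra hne
        have hpn : p ∣ n := by
          have hd : p ∣ n * q ^ a := h ▸ h1
          rcases (Nat.Prime.dvd_mul hp).mp hd with h' | h'
          · exact h'
          · exact absurd ((Nat.prime_dvd_prime_iff_eq hp hq).mp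
              (hp.dvd_of_dvd_pow h')).symm hne
        exact h2 (h ▸ dvd_mul_of_dvd_left (hU hpn) _)
      rw [hqp] at h
      have hpn : ¬ p ∣ n := fun hpn => h2 (h ▸ dvd_mul_of_dvd_left (hU hpn) _)
      have ha1 : a = 1 := by
        by_contra hne
        have h2a : 2 ≤ a := by omega
        exact h2 (h ▸ Dvd.dvd.mul_left (pow_dvd_pow p h2a) n)
      rw [Nat.factorization_eq_zero_of_not_dvd hpn, h, ha1]
      ring
    · -- n = m * q ^ a
      have hqp : q = p := by
        by_contra hne
        have hcop : Nat.Coprime (p ^ 2) (q ^ a) :=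
          Nat.Coprime.pow _ _ ((Nat.coprime_primes hp hq).mpr fun e => hne e.symm)
        have hd : p ^ 2 ∣ m * q ^ a := h ▸ hU (h ▸ dvd_mul_of_dvd_left h1 _)
        exact h2 (hcop.dvd_of_dvd_mul_right hd)
      rw [hqp] at h
      have hfm : m.factorization p = 1 := by
        have h1' : 1 ≤ m.factorization p :=
          (Nat.Prime.dvd_iff_one_le_factorization hp hm.ne').mp h1
        have h2' : ¬ 2 ≤ m.factorization p := fun hle =>
          h2 ((Nat.Prime.pow_dvd_iff_le_factorization hp hm.ne').mpr hle)
        omega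
      have hfn : n.factorization p = a + 1 := by
        rw [h, Nat.factorization_mul hm.ne' (pow_ne_zero a hp.pos.ne')]
        simp only [Finsupp.coe_add, Pi.add_apply, hfm, Nat.Prime.factorization_pow hp,
          Finsupp.single_eq_same]
        omega
      rw [hfn, h]
      ring
  refine ⟨?_, ?_, ?_⟩
  · intro n hn hU m₁ h₁ m₂ h₂
    exact Nat.eq_of_mul_eq_mul_right (pow_pos hp.pos _)
      ((key n hn hU m₁ h₁).trans (key n hn hU m₂ h₂).symm)
  · intro n hn hU
    exact Set.Subsingleton.finite fun m₁ h₁ m₂ h₂ =>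
      Nat.eq_of_mul_eq_mul_right (pow_pos hp.pos _)
        ((key n hn hU m₁ h₁).trans (key n hn hU m₂ h₂).symm)
  · apply Set.infinite_of_injective_forall_mem (f := fun k : ℕ => p * (k * p + 1))
    case hi =>
      intro a b hab
      simp only at hab
      have h1 := Nat.eq_of_mul_eq_mul_left hp.pos hab
      exact Nat.eq_of_mul_eq_mul_right hp.pos (by omega)
    case hf =>
      intro k
      refine ⟨Nat.mul_pos hp.pos (Nat.succ_pos _), fun himp => ?_⟩
      have hd : p ^ 2 ∣ p * (k * p + 1) := himp (Dvd.intro _ rfl)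
      have hpk : p ∣ k * p + 1 := by
        have h' : p * p ∣ p * (k * p + 1) := by rw [← sq]; exact hd
        exact (mul_dvd_mul_iff_left hp.pos.ne').mp h'
      have hp1 : p ∣ 1 := (Nat.dvd_add_right ⟨k, by ring⟩).mp hpk
      have hle := Nat.le_of_dvd one_pos hp1
      have := hp.two_le
      omega
end

section
/- For a prime p let V_p = { n ∈ ℕ_{>0} : p ∣ n → p² ∣ n }. Then (i) the union of the V_p over all primes p is all of ℕ_{>0} (since n ∈ V_q for every prime q not dividing n), but (ii) for any finite set of primes p_1, ..., p_k, the squarefree number p_1·p_2·⋯·p_k does not belong to V_{p_1} ∪ ... ∪ V_{p_k}. Hence the open cover {V_p} of ℕ_{>0} admits no finite subcover. -/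
/-- The sets `V_p = {n : p ∣ n → p ^ 2 ∣ n}` cover `ℕ_{>0}`, but for any finite set of primes
`p₁,…,p_k` the squarefree number `p₁⋯p_k` lies in none of `V_{p₁},…,V_{p_k}`: the cover has
no finite subcover, so the Habiro topology is not compact. -/
theorem habiro_not_compact :
    (∀ n : ℕ, 0 < n → ∃ p : ℕ, p.Prime ∧ (p ∣ n → p ^ 2 ∣ n)) ∧
    ∀ s : Finset ℕ, (∀ p ∈ s, p.Prime) →
      ∀ p ∈ s, ¬ (p ∣ ∏ q ∈ s, q → p ^ 2 ∣ ∏ q ∈ s, q) := by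
  constructor
  · intro n hn
    obtain ⟨p, hpn, hp⟩ := Nat.exists_infinite_primes (n + 1)
    exact ⟨p, hp, fun hd => absurd (Nat.le_of_dvd hn hd) (by omega)⟩
  · intro s hs p hp h
    have hdvd : p ∣ ∏ q ∈ s, q := Finset.dvd_prod_of_mem _ hp
    have h2 := h hdvd
    have hprod : ∏ q ∈ s, q = p * ∏ q ∈ s.erase p, q :=
      (Finset.mul_prod_erase s _ hp).symm
    have hpp := hs p hp
    have hne : p ≠ 0 := hpp.ne_zero
    have : p ∣ ∏ q ∈ s.erase p, q := by
      rw [hprod, pow_two] at h2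
      exact (mul_dvd_mul_iff_left hne).mp h2
    obtain ⟨q, hq, hpq⟩ := hpp.prime.exists_mem_finset_dvd this
    have hq' := Finset.mem_erase.mp hq
    exact hq'.1 ((Nat.prime_dvd_prime_iff_eq hpp (hs q hq'.2)).mp hpq).symm
end
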